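/- For all integers k ≥ 3, ℓ ≥ 3, and 2 ≤ r ≤ k−1, and every integer n ≥ k(ℓ+1)r(1 + ln r), every coloring of the k-element subsets of an n-element set with r colors yields a monochromatic copy of the k-uniform loose path P_ℓ^(k) of length ℓ. -/

import Mathlib

/-!
Take `2rℓ + 2` junction vertices and `rℓ + 1` disjoint blocks of `k - 2` further vertices; this
only needs `k (ℓ + 1) r ≤ n`. For junctions `x ≠ y` and a block `t`, `{x, y} ∪ t` is an edge. By
pigeonhole every pair `{x, y}` has a majority colour, carried by at least `ℓ` of the blocks, and
for one colour the graph of pairs with that majority colour has more than `ℓ` times as many edges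
as vertices. Deleting vertices of degree `< ℓ` one at a time leaves a nonempty graph of minimum
degree `≥ ℓ`, in which a path `x₀ … x_ℓ` is found greedily. Assigning greedily distinct blocks of
the right colour to the `ℓ` edges `xᵢ xᵢ₊₁` produces the monochromatic loose path.
-/

/-- The coloring `χ` of the `k`-element subsets contains a monochromatic copy of the
`k`-uniform loose path of length `ℓ`: there are a color `c` and distinct vertices
`f 0, …, f ((k-1)ℓ)` such that each of the `ℓ` consecutive edges
`{f (i(k-1)), …, f (i(k-1)+k-1)}` (consecutive edges sharing exactly one vertex)
receives color `c`. -/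
def HasMonoLoosePath {α : Type} [DecidableEq α] {r : ℕ} (k ℓ : ℕ)
    (χ : Finset α → Fin r) : Prop :=
  ∃ c : Fin r, ∃ f : ℕ → α, Set.InjOn f (Set.Iio ((k - 1) * ℓ + 1)) ∧
    ∀ i < ℓ, χ ((Finset.Ico (i * (k - 1)) (i * (k - 1) + k)).image f) = c

open Finset

theorem HasMonoLoosePath.of_embedding {α β : Type} [DecidableEq α] [DecidableEq β] {r k ℓ : ℕ}
    {χ : Finset α → Fin r} (e : β ↪ α) (h : HasMonoLoosePath k ℓ fun s => χ (s.map e)) :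
    HasMonoLoosePath k ℓ χ := by
  obtain ⟨c, f, hf, hχ⟩ := h
  dsimp only at hχ
  refine ⟨c, e ∘ f, e.injective.comp_injOn hf, fun i hi => ?_⟩
  rw [← hχ i hi, map_eq_image, image_image]

theorem exists_injOn_mem_of_lt_card {α : Type*} [DecidableEq α] [Nonempty α]
    (t : ℕ → Finset α) (ℓ : ℕ) (h : ∀ i < ℓ, i < #(t i)) :
    ∃ f : ℕ → α, Set.InjOn f (Set.Iio ℓ) ∧ ∀ i < ℓ, f i ∈ t i := by
  induction ℓ with
  | zero => exact ⟨fun _ => Classical.arbitrary α, by simp, by simp⟩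
  | succ s ih =>
    obtain ⟨f, hf, hft⟩ := ih fun i hi => h i (by omega)
    obtain ⟨a, hat, haf⟩ : ∃ a ∈ t s, a ∉ (range s).image f := by
      by_contra! hsub
      have := (card_le_card hsub).trans card_image_le
      have := h s (by omega)
      simp only [card_range] at *
      omega
    have hEq : Set.EqOn (Function.update f s a) f (Set.Iio s) := fun i hi =>
      Function.update_of_ne (ne_of_lt hi) _ _
    refine ⟨Function.update f s a, ?_, fun i hi => ?_⟩
    · rw [← Order.succ_eq_add_one, Order.Iio_succ_eq_insert, Set.injOn_insert (by simp),
        hEq.image_eq]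
      refine ⟨hf.congr hEq.symm, ?_⟩
      simpa using haf
    · rcases (Nat.lt_succ_iff_lt_or_eq.mp hi) with hi | rfl
      · rw [hEq hi]; exact hft i hi
      · simpa using hat

namespace SimpleGraph

variable {V : Type*} [Fintype V] [DecidableEq V] {G : SimpleGraph V} [DecidableRel G.Adj]

theorem exists_isPath_length_eq_of_le_degree {ℓ : ℕ} (hdeg : ∀ v ∈ G.support, ℓ ≤ G.degree v)
    {x : V} (hx : x ∈ G.support) : ∃ (y : V) (p : G.Walk y x), p.IsPath ∧ p.length = ℓ := by
  suffices ∀ s ≤ ℓ, ∃ y ∈ G.support, ∃ p : G.Walk y x, p.IsPath ∧ p.length = s by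
    obtain ⟨y, -, p, hp⟩ := this ℓ le_rfl
    exact ⟨y, p, hp⟩
  intro s hs
  induction s with
  | zero => exact ⟨x, hx, .nil, .nil, rfl⟩
  | succ s ih =>
    obtain ⟨y, hy, p, hp, rfl⟩ := ih (by omega)
    -- `y` has more than `p.length` neighbours, and `p` has only `p.length` vertices besides `y`.
    obtain ⟨z, hzy, hzp⟩ : ∃ z ∈ G.neighborFinset y, z ∉ p.support := by
      by_contra! hsub
      have hsub' : G.neighborFinset y ⊆ p.support.toFinset.erase y := fun z hz =>
        mem_erase.mpr ⟨G.ne_of_adj ((G.mem_neighborFinset y z).mp hz) |>.symm,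
          List.mem_toFinset.mpr (hsub z hz)⟩
      have := card_le_card hsub'
      rw [card_erase_of_mem (by simp), List.toFinset_card_of_nodup hp.support_nodup,
        Walk.length_support, card_neighborFinset_eq_degree] at this
      have := hdeg y hy
      omega
    have hzy : G.Adj z y := ((G.mem_neighborFinset y z).mp hzy).symm
    exact ⟨z, ⟨y, hzy⟩, .cons hzy p, hp.cons hzp, by simp⟩

theorem exists_isPath_length_eq_of_mul_card_lt {ℓ : ℕ} (W : Finset V) (hW : G.support ⊆ W)
    (h : ℓ * #W < #G.edgeFinset) : ∃ (x y : V) (p : G.Walk x y), p.IsPath ∧ p.length = ℓ := by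
  induction W using Finset.strongInduction generalizing G with
  | H W ih =>
    by_cases hlow : ∃ v ∈ W, G.degree v < ℓ
    · -- deleting the edges at a vertex of low degree keeps the edge density above `ℓ`
      obtain ⟨v, hv, hdeg⟩ := hlow
      have hsupp : (G.deleteIncidenceSet v).support ⊆ W.erase v := fun u hu => by
        have := G.support_deleteIncidenceSet_subset v hu
        simp only [Set.mem_sdiff, Set.mem_singleton_iff] at this
        simpa [this.2] using hW this.1
      have hcard : ℓ * #(W.erase v) < #(G.deleteIncidenceSet v).edgeFinset := by
        rw [card_edgeFinset_deleteIncidenceSet, card_erase_of_mem hv, Nat.mul_sub_one]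
        have : G.degree v ≤ #G.edgeFinset := by
          rw [← card_incidenceFinset_eq_degree]
          exact card_le_card (G.incidenceFinset_subset v)
        have : ℓ ≤ ℓ * #W := Nat.le_mul_of_pos_right ℓ (card_pos.mpr ⟨v, hv⟩)
        omega
      obtain ⟨x, y, p, hp, hlen⟩ := ih _ (erase_ssubset hv) hsupp hcard
      exact ⟨x, y, p.mapLe (G.deleteIncidenceSet_le v), hp.mapLe _, by simpa using hlen⟩
    · push Not at hlow
      obtain ⟨a, b, hab⟩ := ne_bot_iff_exists_adj.mp <| edgeFinset_nonempty.mp <|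
        card_pos.mp (h.trans_le' (Nat.zero_le _))
      obtain ⟨y, p, hp⟩ :=
        exists_isPath_length_eq_of_le_degree (fun u hu => hlow u (hW hu)) ⟨b, hab⟩
      exact ⟨y, a, p, hp⟩

end SimpleGraph

theorem SimpleGraph.EdgeLabeling.exists_lt_card_edgeFinset_labelGraph {V K : Type*} [Fintype V]
    [DecidableEq V] {G : SimpleGraph V} [DecidableRel G.Adj] [Fintype K] [DecidableEq K]
    (C : G.EdgeLabeling K) {n : ℕ} (h : Fintype.card K * n < #G.edgeFinset) :
    ∃ k, n < #(C.labelGraph k).edgeFinset := by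
  obtain ⟨k, hk⟩ := Fintype.exists_lt_card_fiber_of_mul_lt_card C (by rwa [G.card_edgeSet])
  refine ⟨k, hk.trans_le <|
    card_le_card_of_injOn Subtype.val (fun e he => ?_) Subtype.val_injective.injOn⟩
  simp only [coe_filter, Set.mem_ofPred_eq, mem_univ, true_and] at he
  rw [mem_coe, mem_edgeFinset, labelGraph, edgeSet_fromEdgeSet]
  exact ⟨⟨e.2, he⟩, G.not_isDiag_of_mem_edgeSet e.2⟩

theorem Nat.mul_lt_choose_two {a m : ℕ} (h : 2 * a + 1 < m) : a * m < m.choose 2 := by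
  rw [Nat.choose_two_right]
  apply (Nat.le_div_iff_mul_le two_pos).mpr
  obtain ⟨m, rfl⟩ : ∃ m', m = m' + 1 := ⟨m - 1, by omega⟩
  rw [Nat.add_sub_cancel]
  nlinarith

theorem exists_monochromatic_path_of_card_lt {ι K : Type*} [Fintype ι] [DecidableEq ι]
    [Fintype K] [DecidableEq K] (C : Sym2 ι → K) {ℓ : ℕ}
    (h : 2 * (Fintype.card K * ℓ) + 1 < Fintype.card ι) :
    ∃ c, ∃ g : ℕ → ι, Set.InjOn g (Set.Iio (ℓ + 1)) ∧ ∀ i < ℓ, C s(g i, g (i + 1)) = c := by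
  let L : SimpleGraph.TopEdgeLabeling ι K := fun e => C e
  obtain ⟨c, hc⟩ := L.exists_lt_card_edgeFinset_labelGraph (n := ℓ * Fintype.card ι) <| by
    rw [SimpleGraph.card_edgeFinset_top_eq_card_choose_two, ← mul_assoc]
    exact Nat.mul_lt_choose_two h
  obtain ⟨x, y, p, hp, hlen⟩ :=
    SimpleGraph.exists_isPath_length_eq_of_mul_card_lt univ (by simp) hc
  refine ⟨c, p.getVert, hp.getVert_injOn.mono fun i hi => ?_, fun i hi => ?_⟩
  · simp only [Set.mem_Iio, Set.mem_ofPred_eq, hlen] at hi ⊢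
    omega
  · obtain ⟨_, h⟩ := (SimpleGraph.TopEdgeLabeling.labelGraph_adj _ _).mp
      (p.adj_getVert_succ (hlen ▸ hi))
    simpa [SimpleGraph.EdgeLabeling.get_eq] using h

section LoosePathVertex

variable {α : Type*} {d : ℕ} (u : ℕ → α) (w : ℕ → Fin d → α)

/-- Vertex `i * (d + 1)` of the loose path is the junction `u i`, vertex `i * (d + 1) + q + 1`
is the interior vertex `w i q` of the `i`-th edge. -/
def loosePathVertex (m : ℕ) : α :=
  let p := Nat.divModEquiv (d + 1) m
  (Fin.cons (u p.1) (w p.1) : Fin (d + 1) → α) p.2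

theorem loosePathVertex_mul_add (i : ℕ) (q : Fin (d + 1)) :
    loosePathVertex u w (i * (d + 1) + q) = (Fin.cons (u i) (w i) : Fin (d + 1) → α) q := by
  have : Nat.divModEquiv (d + 1) (i * (d + 1) + q) = (i, q) :=
    (Nat.divModEquiv (d + 1)).apply_symm_apply (i, q)
  simp only [loosePathVertex, this]

theorem image_Ico_loosePathVertex [DecidableEq α] (i : ℕ) :
    (Ico (i * (d + 1)) (i * (d + 1) + (d + 2))).image (loosePathVertex u w) =
      insert (u i) (insert (u (i + 1)) (univ.image (w i))) := by
  have hIco : Ico (i * (d + 1)) (i * (d + 1) + (d + 2)) =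
      insert ((i + 1) * (d + 1) + (0 : Fin (d + 1)))
        (univ.image fun q : Fin (d + 1) => i * (d + 1) + q) := by
    ext m
    simp only [mem_Ico, mem_insert, mem_image, mem_univ, true_and, Fin.val_zero, add_mul, one_mul]
    constructor
    · rintro ⟨h₁, h₂⟩
      by_cases hm : m < i * (d + 1) + (d + 1)
      · exact Or.inr ⟨⟨m - i * (d + 1), by omega⟩, by simp; omega⟩
      · left; omega
    · rintro (rfl | ⟨q, rfl⟩) <;> omega
  rw [hIco, image_insert, image_image, Fin.univ_succ, cons_eq_insert, image_insert, map_eq_image,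
    image_image]
  simp only [Function.comp_def, loosePathVertex_mul_add, Fin.cons_zero]
  exact insert_comm _ _ _

theorem injOn_loosePathVertex {ℓ : ℕ} (hu : Set.InjOn u (Set.Iio (ℓ + 1)))
    (hw : Set.InjOn (Function.uncurry w) (Set.Iio ℓ ×ˢ Set.univ))
    (huw : ∀ i j q, u i ≠ w j q) :
    Set.InjOn (loosePathVertex u w) (Set.Iio ((d + 1) * ℓ + 1)) := by
  have hbound : ∀ (i : ℕ) (q : Fin (d + 1)), i * (d + 1) + q < (d + 1) * ℓ + 1 →
      i < ℓ ∨ i = ℓ ∧ q = 0 := by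
    intro i q h
    rw [mul_comm (d + 1)] at h
    rcases Nat.lt_or_ge i ℓ with hi | hi
    · exact Or.inl hi
    · have : ℓ * (d + 1) ≤ i * (d + 1) := Nat.mul_le_mul_right _ hi
      have hiℓ : i = ℓ :=
        le_antisymm (Nat.le_of_mul_le_mul_right (by omega) (by omega : 0 < d + 1)) hi
      exact Or.inr ⟨hiℓ, Fin.ext (by rw [Fin.val_zero]; omega)⟩
  intro a ha b hb hab
  obtain ⟨⟨i, p⟩, rfl⟩ := (Nat.divModEquiv (d + 1)).symm.surjective a
  obtain ⟨⟨j, q⟩, rfl⟩ := (Nat.divModEquiv (d + 1)).symm.surjective b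
  simp only [Nat.divModEquiv_symm_apply, Set.mem_Iio, loosePathVertex_mul_add] at ha hb hab ⊢
  suffices i = j ∧ p = q by rw [this.1, this.2]
  have hi := hbound i p ha
  have hj := hbound j q hb
  induction p using Fin.cases with
  | zero => induction q using Fin.cases with
    | zero =>
      simp only [Fin.cons_zero] at hab
      exact ⟨hu (by simp; omega) (by simp; omega) hab, rfl⟩
    | succ q => exact absurd hab (by simpa using huw i j q)
  | succ p => induction q using Fin.cases with
    | zero => exact absurd hab.symm (by simpa using huw j i p)
    | succ q =>
      simp only [Fin.cons_succ] at hab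
      have := @hw (i, p) (by simpa using hi) (j, q) (by simpa using hj) hab
      simp only [Prod.mk.injEq] at this
      exact ⟨this.1, congrArg Fin.succ this.2⟩

end LoosePathVertex

theorem hasMonoLoosePath_of_junctions {α : Type} [DecidableEq α] {r d ℓ : ℕ}
    (χ : Finset α → Fin r) (c : Fin r) (u : ℕ → α) (w : ℕ → Fin d → α)
    (hu : Set.InjOn u (Set.Iio (ℓ + 1)))
    (hw : Set.InjOn (Function.uncurry w) (Set.Iio ℓ ×ˢ Set.univ)) (huw : ∀ i j q, u i ≠ w j q)
    (hχ : ∀ i < ℓ, χ (insert (u i) (insert (u (i + 1)) (univ.image (w i)))) = c) :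
    HasMonoLoosePath (d + 2) ℓ χ :=
  ⟨c, loosePathVertex u w, injOn_loosePathVertex u w hu hw huw, fun i hi => by
    simpa [image_Ico_loosePathVertex] using hχ i hi⟩

section Blocks

variable {ι κ : Type} [Fintype ι] [DecidableEq ι] [Fintype κ] [DecidableEq κ]

def blockEdge (d : ℕ) (e : Sym2 ι) (t : κ) : Finset (ι ⊕ κ × Fin d) :=
  Sym2.lift ⟨fun x y => insert (.inl x) (insert (.inl y) (univ.image fun q => .inr (t, q))),
    fun _ _ => insert_comm _ _ _⟩ e

theorem hasMonoLoosePath_of_card_lt {r : ℕ} (d ℓ : ℕ) (hι : 2 * (r * ℓ) + 1 < Fintype.card ι)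
    (hκ : r * ℓ < Fintype.card κ) (χ : Finset (ι ⊕ κ × Fin d) → Fin r) :
    HasMonoLoosePath (d + 2) ℓ χ := by
  have : Nonempty (Fin r) := ⟨χ ∅⟩
  have : Nonempty κ := Fintype.card_pos_iff.mp (by omega)
  have hmajority : ∀ e : Sym2 ι, ∃ c, ℓ ≤ #{t | χ (blockEdge d e t) = c} := fun e =>
    Fintype.exists_le_card_fiber_of_mul_le_card _ (by simpa using hκ.le)
  choose C hC using hmajority
  obtain ⟨c, g, hg, hgc⟩ := exists_monochromatic_path_of_card_lt C (by simpa using hι)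
  obtain ⟨τ, hτ, hτc⟩ := exists_injOn_mem_of_lt_card
    (fun i => univ.filter fun t => χ (blockEdge d s(g i, g (i + 1)) t) = c) ℓ
    fun i hi => by
      have := hC s(g i, g (i + 1))
      rw [hgc i hi] at this
      omega
  refine hasMonoLoosePath_of_junctions χ c (fun i => .inl (g i)) (fun i q => .inr (τ i, q))
    (Sum.inl_injective.comp_injOn hg) ?_ (fun _ _ _ => Sum.inl_ne_inr) fun i hi => by
      simpa [blockEdge] using (mem_filter.mp (hτc i hi)).2
  rintro ⟨i, q⟩ ⟨hi, -⟩ ⟨j, q'⟩ ⟨hj, -⟩ h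
  simp only [Function.uncurry_apply_pair, Sum.inr.injEq, Prod.mk.injEq] at h
  exact Prod.ext (hτ hi hj h.1) h.2

end Blocks

theorem loosePath_dfs_bound_simple_general (k ℓ r : ℕ) (hk : 3 ≤ k) (hr2 : 2 ≤ r) (n : ℕ)
    (hn : (k : ℝ) * (ℓ + 1) * r * (1 + Real.log r) ≤ n)
    (χ : Finset (Fin n) → Fin r) :
    HasMonoLoosePath k ℓ χ := by
  obtain ⟨d, rfl⟩ : ∃ d, k = d + 2 := ⟨k - 2, by omega⟩
  have hkn : (d + 2) * (ℓ + 1) * r ≤ n := by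
    have : ((d + 2 : ℕ) : ℝ) * (ℓ + 1) * r ≤ ((d + 2 : ℕ) : ℝ) * (ℓ + 1) * r * (1 + Real.log r) :=
      le_mul_of_one_le_right (by positivity) (by linarith [Real.log_natCast_nonneg r])
    exact_mod_cast this.trans hn
  have hcard :
      Fintype.card (Fin (2 * (r * ℓ) + 2) ⊕ Fin (r * ℓ + 1) × Fin d) ≤ Fintype.card (Fin n) := by
    simp only [Fintype.card_sum, Fintype.card_prod, Fintype.card_fin]
    nlinarith
  obtain ⟨e⟩ := Function.Embedding.nonempty_of_card_le hcard
  exact (hasMonoLoosePath_of_card_lt d ℓ (by simp) (by simp) fun s => χ (s.map e)).of_embedding e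

theorem loosePath_dfs_bound_simple (k ℓ r : ℕ) (hk : 3 ≤ k) (hl : 3 ≤ ℓ) (hr2 : 2 ≤ r)
    (hrk : r ≤ k - 1) (n : ℕ)
    (hn : (k : ℝ) * (ℓ + 1) * r * (1 + Real.log r) ≤ n)
    (χ : Finset (Fin n) → Fin r) :
    HasMonoLoosePath k ℓ χ :=
  loosePath_dfs_bound_simple_general k ℓ r hk hr2 n hn χ
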